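/- Let n ≥ 1 be an integer, let ℓ < M be nonnegative integers, let J be a finite subset of {ℓ, ℓ+1, …, M} containing both ℓ and M, let θ > 0 and σ_M ≥ 0 be reals, and set σ = σ_M + (M−ℓ)θ. For η ∈ [0,∞) define g(η) = min_{j ∈ J} ( (j−ℓ)η + 2(σ_M + (M−j)θ) ). Then: (i) g(η) = 2σ_M + (M−ℓ)·min(η, 2θ) for all η ≥ 0; and (ii) if moreover 2σ < n + 2θ, then n + η − g(η) > 0 for all η ≥ 0 and sup_{η ∈ [0,∞)} (n+η)/(n+η−g(η)) = 1 + 2σ/(n + 2θ − 2σ), the supremum being attained at η = 2θ. (This computes the critical exponent p_c for a quasi-homogeneous operator L = Σ_{j∈J} b_j (−Δ)^{σ_M + (M−j)θ} ∂_t^j with nonlinearity |∂_t^ℓ u|^p.) -/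

import Mathlib

/-!
Each summand `(j - ℓ) η + 2 (σ_M + (M - j) θ)` is affine in `j`, so its minimum over
`J ⊆ [ℓ, M]` is attained at one of the endpoints `j = ℓ`, `j = M`, both of which lie in `J`;
this gives `g(η) = 2σ_M + (M - ℓ) min(η, 2θ)`.

Writing `h(η) = 1 + g(η) / (n + η - g(η))`, the numerator `g` is largest at `η = 2θ`, where it
equals `2σ`, and since `M - ℓ ≥ 1` the denominator `n + η - g(η)` is smallest there. Hence `h`
is maximal at `η = 2θ`.
-/

open Set

theorem Finset.inf'_eq_min_of_concaveOn {ι 𝕜 β : Type*} [Field 𝕜] [LinearOrder 𝕜]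
    [IsStrictOrderedRing 𝕜] [AddCommGroup β] [LinearOrder β] [IsOrderedAddMonoid β]
    [Module 𝕜 β] [IsStrictOrderedModule 𝕜 β] {s : Finset ι} (hs : s.Nonempty) {x : ι → 𝕜}
    {f : 𝕜 → β} {i₀ i₁ : ι} (hf : ConcaveOn 𝕜 (Set.Icc (x i₀) (x i₁)) f) (h₀ : i₀ ∈ s)
    (h₁ : i₁ ∈ s) (hx : ∀ i ∈ s, x i ∈ Set.Icc (x i₀) (x i₁)) :
    s.inf' hs (fun i => f (x i)) = min (f (x i₀)) (f (x i₁)) := by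
  have hle : x i₀ ≤ x i₁ := (hx i₀ h₀).1.trans (hx i₀ h₀).2
  refine le_antisymm (le_min (inf'_le _ h₀) (inf'_le _ h₁)) (le_inf' _ _ fun i hi => ?_)
  exact hf.min_le_of_mem_Icc (Set.left_mem_Icc.2 hle) (Set.right_mem_Icc.2 hle) (hx i hi)

theorem inf'_quasiHomogeneous_eq {ℓ M : ℕ} {J : Finset ℕ} (hJ : J ⊆ Finset.Icc ℓ M)
    (hℓJ : ℓ ∈ J) (hMJ : M ∈ J) (θ σM η : ℝ) :
    J.inf' ⟨ℓ, hℓJ⟩ (fun j => ((j : ℝ) - ℓ) * η + 2 * (σM + ((M : ℝ) - j) * θ))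
      = 2 * σM + ((M : ℝ) - ℓ) * min η (2 * θ) := by
  have hcast : ∀ j ∈ J, (j : ℝ) ∈ Icc (ℓ : ℝ) M := fun j hj => by
    obtain ⟨h₁, h₂⟩ := Finset.mem_Icc.1 (hJ hj)
    exact ⟨Nat.cast_le.2 h₁, Nat.cast_le.2 h₂⟩
  have hm : (0 : ℝ) ≤ (M : ℝ) - ℓ := sub_nonneg.2 (hcast M hMJ).1
  have hf : ConcaveOn ℝ (Icc (ℓ : ℝ) M)
      (fun y : ℝ => (y - ℓ) * η + 2 * (σM + ((M : ℝ) - y) * θ)) := by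
    refine (((LinearMap.mulLeft ℝ (η - 2 * θ)).concaveOn (convex_Icc (ℓ : ℝ) M)).add_const
      (2 * σM + 2 * M * θ - ℓ * η)).congr fun y _ => ?_
    rw [Pi.add_apply, LinearMap.mulLeft_apply]
    ring
  refine (Finset.inf'_eq_min_of_concaveOn (x := Nat.cast) _ hf hℓJ hMJ hcast).trans ?_
  rw [mul_min_of_nonneg _ _ hm, ← min_add_add_left, min_comm]
  congr 1 <;> ring

theorem sub_mul_self_le_sub_mul_min {m : ℝ} (hm : 1 ≤ m) (η t : ℝ) :
    t - m * t ≤ η - m * min η t := by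
  rcases le_total η t with h | h
  · rw [min_eq_left h]
    nlinarith
  · rw [min_eq_right h]
    linarith

theorem div_sub_le_div_sub {a b x y : ℝ} (hx : 0 ≤ x) (hxy : x ≤ y) (hb : 0 < b - y)
    (hab : b - y ≤ a - x) : a / (a - x) ≤ b / (b - y) := by
  have ha : 0 < a - x := hb.trans_le hab
  calc a / (a - x) = 1 + x / (a - x) := by rw [one_add_div ha.ne', sub_add_cancel]
    _ ≤ 1 + y / (b - y) := add_le_add_right (div_le_div₀ (hx.trans hxy) hxy hb hab) 1
    _ = b / (b - y) := by rw [one_add_div hb.ne', sub_add_cancel]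

theorem stmt15 (n : ℕ) (ℓ M : ℕ) (hlM : ℓ < M)
    (J : Finset ℕ) (hJ : J ⊆ Finset.Icc ℓ M) (hℓJ : ℓ ∈ J) (hMJ : M ∈ J)
    (θ : ℝ) (hθ : 0 < θ) (σM : ℝ) (hσM : 0 ≤ σM) :
    (∀ η : ℝ, 0 ≤ η →
      J.inf' ⟨ℓ, hℓJ⟩
          (fun j => ((j : ℝ) - ℓ) * η + 2 * (σM + ((M : ℝ) - j) * θ))
        = 2 * σM + ((M : ℝ) - ℓ) * min η (2 * θ)) ∧
    (2 * (σM + ((M : ℝ) - ℓ) * θ) < (n : ℝ) + 2 * θ →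
      (∀ η : ℝ, 0 ≤ η →
        0 < (n : ℝ) + η - J.inf' ⟨ℓ, hℓJ⟩
            (fun j => ((j : ℝ) - ℓ) * η + 2 * (σM + ((M : ℝ) - j) * θ))) ∧
      IsGreatest {x : ℝ | ∃ η : ℝ, 0 ≤ η ∧
          x = ((n : ℝ) + η) / ((n : ℝ) + η - J.inf' ⟨ℓ, hℓJ⟩
            (fun j => ((j : ℝ) - ℓ) * η + 2 * (σM + ((M : ℝ) - j) * θ)))}
        (1 + 2 * (σM + ((M : ℝ) - ℓ) * θ) /
          ((n : ℝ) + 2 * θ - 2 * (σM + ((M : ℝ) - ℓ) * θ))) ∧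
      ((n : ℝ) + 2 * θ) / ((n : ℝ) + 2 * θ - J.inf' ⟨ℓ, hℓJ⟩
            (fun j => ((j : ℝ) - ℓ) * (2 * θ) + 2 * (σM + ((M : ℝ) - j) * θ)))
        = 1 + 2 * (σM + ((M : ℝ) - ℓ) * θ) /
            ((n : ℝ) + 2 * θ - 2 * (σM + ((M : ℝ) - ℓ) * θ))) := by
  have hg := inf'_quasiHomogeneous_eq hJ hℓJ hMJ θ σM
  refine ⟨fun η _ => hg η, fun hcrit => ?_⟩
  set m : ℝ := (M : ℝ) - ℓ with hm_def
  set σ : ℝ := σM + m * θ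
  have hm : 1 ≤ m := by
    rw [hm_def, le_sub_iff_add_le']
    exact_mod_cast hlM
  have hg2θ : 2 * σM + m * min (2 * θ) (2 * θ) = 2 * σ := by rw [min_self]; ring
  have hd : 0 < (n : ℝ) + 2 * θ - 2 * σ := by linarith
  have hden : ∀ η, (n : ℝ) + 2 * θ - 2 * σ ≤ n + η - (2 * σM + m * min η (2 * θ)) := by
    intro η
    linarith [sub_mul_self_le_sub_mul_min hm η (2 * θ)]
  have hval : ((n : ℝ) + 2 * θ) / (n + 2 * θ - 2 * σ) = 1 + 2 * σ / (n + 2 * θ - 2 * σ) := by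
    rw [one_add_div hd.ne', sub_add_cancel]
  refine ⟨fun η _ => by rw [hg]; exact hd.trans_le (hden η),
    ⟨⟨2 * θ, by positivity, by rw [hg, hg2θ, hval]⟩, ?_⟩, by rw [hg, hg2θ, hval]⟩
  rintro _ ⟨η, hη, rfl⟩
  have hmin : m * min η (2 * θ) ≤ m * (2 * θ) := by gcongr; exact min_le_right _ _
  rw [hg, ← hval]
  exact div_sub_le_div_sub (by positivity) (by linarith) hd (hden η)
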